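/- Let G be a 2-connected finite simple graph with n vertices and let f : ℕ → ℝ be a strictly increasing function. Then W_f(G) ≤ W_f(C_n), with equality if and only if G is isomorphic to the cycle C_n. -/

import Mathlib

open Finset

/-- The distance between the two endpoints of an unordered pair of vertices. -/
noncomputable def pairDist {V : Type*} (G : SimpleGraph V) : Sym2 V → ℕ :=
  Sym2.lift ⟨G.dist, fun _ _ => SimpleGraph.dist_comm⟩

/-- The generalised Wiener index `W_f`: the sum of `f` of the distances over all
unordered pairs of distinct vertices. -/
noncomputable def wienerF {V : Type*} [Fintype V] [DecidableEq V]
    (G : SimpleGraph V) (f : ℕ → ℝ) : ℝ :=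
  ∑ p ∈ Finset.univ.filter (fun p : Sym2 V => ¬ p.IsDiag), f (pairDist G p)

/-- `G` is `κ`-connected: it has more than `κ` vertices and deleting any set of
fewer than `κ` vertices leaves a connected graph. -/
def KConnected {V : Type*} [Fintype V] (G : SimpleGraph V) (κ : ℕ) : Prop :=
  κ < Fintype.card V ∧
    ∀ S : Finset V, S.card < κ → (G.induce ((↑S : Set V)ᶜ)).Connected

set_option linter.unusedSectionVars false

namespace WienerAux

open SimpleGraph

variable {V : Type*} [Fintype V] [DecidableEq V] {G : SimpleGraph V}

/-- Along a walk, every intermediate distance from `u` is attained. -/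
lemma exists_mem_support_dist_eq (hc : G.Connected) (u : V) :
    ∀ {a b : V} (W : G.Walk a b) (i : ℕ), G.dist u a ≤ i → i ≤ G.dist u b →
      ∃ x ∈ W.support, G.dist u x = i
  | a, _, .nil, i, ha, hb => ⟨a, by simp, le_antisymm ha hb⟩
  | a, b, .cons (v := c) h W, i, ha, hb => by
    by_cases hai : G.dist u a = i
    · exact ⟨a, by simp, hai⟩
    · by_cases hci : G.dist u c ≤ i
      · obtain ⟨x, hx, hxd⟩ := exists_mem_support_dist_eq hc u W i hci hb
        exact ⟨x, by simp [hx], hxd⟩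
      · exfalso
        have h2 : G.dist u c ≤ G.dist u a + G.dist a c := hc.dist_triangle
        have h1 : G.dist a c = 1 := SimpleGraph.dist_eq_one_iff_adj.mpr h
        omega

/-- Every vertex at distance `i+1` from `u` has a neighbour at distance `i`. -/
lemma exists_adj_dist_pred (hc : G.Connected) {u v : V} {i : ℕ} (h : G.dist u v = i + 1) :
    ∃ w, G.Adj w v ∧ G.dist u w = i := by
  obtain ⟨p, hp⟩ := hc.exists_walk_length_eq_dist u v
  have hq : p.reverse.length = i + 1 := by rw [SimpleGraph.Walk.length_reverse, hp, h]
  rcases hrev : p.reverse with _ | ⟨hadj, q⟩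
  · rw [hrev] at hq; simp at hq
  · rw [hrev] at hq
    simp only [SimpleGraph.Walk.length_cons] at hq
    rename_i w
    refine ⟨w, hadj.symm, le_antisymm ?_ ?_⟩
    · have hle := SimpleGraph.dist_le q.reverse
      rw [SimpleGraph.Walk.length_reverse] at hle
      omega
    · have h2 : G.dist u v ≤ G.dist u w + G.dist w v := hc.dist_triangle
      have h1 : G.dist w v = 1 := SimpleGraph.dist_eq_one_iff_adj.mpr hadj.symm
      omega

lemma dist_le_map_iso {W : Type*} {H : SimpleGraph W} {W' : Type*} {H' : SimpleGraph W'}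
    (e : H ≃g H') (u v : W) : H'.dist (e u) (e v) ≤ H.dist u v := by
  by_cases hr : H.Reachable u v
  · obtain ⟨p, hp⟩ := hr.exists_walk_length_eq_dist
    calc H'.dist (e u) (e v) ≤ (p.map e.toHom).length := SimpleGraph.dist_le _
      _ = p.length := SimpleGraph.Walk.length_map _ _
      _ = H.dist u v := hp
  · have hr' : ¬ H'.Reachable (e u) (e v) := fun hr' =>
      hr (by simpa using hr'.map e.symm.toHom)
    rw [SimpleGraph.dist_eq_zero_of_not_reachable hr,
      SimpleGraph.dist_eq_zero_of_not_reachable hr']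

/-- Distances are preserved by isomorphisms. -/
lemma dist_map_iso {W : Type*} {H : SimpleGraph W} {W' : Type*} {H' : SimpleGraph W'}
    (e : H ≃g H') (u v : W) : H'.dist (e u) (e v) = H.dist u v := by
  refine le_antisymm (dist_le_map_iso e u v) ?_
  have := dist_le_map_iso e.symm (e u) (e v)
  simpa using this

/-- `wienerF` is preserved by isomorphisms. -/
lemma wienerF_map_iso {V' : Type*} [Fintype V'] [DecidableEq V'] {G' : SimpleGraph V'}
    (e : G ≃g G') (f : ℕ → ℝ) : wienerF G f = wienerF G' f := by
  unfold wienerF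
  refine Finset.sum_nbij' (fun p => p.map e) (fun q => q.map e.symm) ?_ ?_ ?_ ?_ ?_
  · intro p hp
    induction p with
    | _ a b =>
      simp only [Finset.mem_filter, Finset.mem_univ, true_and, Sym2.map_pair_eq,
        Sym2.mk_isDiag_iff] at hp ⊢
      exact fun hh => hp (e.injective hh)
  · intro q hq
    induction q with
    | _ a b =>
      simp only [Finset.mem_filter, Finset.mem_univ, true_and, Sym2.map_pair_eq,
        Sym2.mk_isDiag_iff] at hq ⊢
      exact fun hh => hq (e.symm.injective hh)
  · intro p _
    induction p with
    | _ a b => simp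
  · intro q _
    induction q with
    | _ a b => simp
  · intro p _
    induction p with
    | _ a b =>
      simp only [Sym2.map_pair_eq]
      have : pairDist G' s(e a, e b) = pairDist G s(a, b) := by
        simp only [pairDist, Sym2.lift_mk]
        exact dist_map_iso e a b
      rw [this]

end WienerAux

set_option linter.unusedSectionVars false

namespace WienerAux

open SimpleGraph Finset

variable {V : Type*} [Fintype V] [DecidableEq V] {G : SimpleGraph V}

lemma card_decomp (hc : G.Connected) (u : V) (k : ℕ) (hk : 1 ≤ k) :
    Fintype.card V = 1 + (∑ i ∈ Ico 1 k, #(univ.filter fun v => G.dist u v = i))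
      + #(univ.filter fun v => k ≤ G.dist u v) := by
  have h0 : Fintype.card V
      = ∑ i ∈ range (k+1), #(univ.filter fun v => min (G.dist u v) k = i) := by
    rw [← Finset.card_univ]
    apply Finset.card_eq_sum_card_fiberwise
    intro v _
    simp [Nat.lt_succ_iff]
  rw [h0, Finset.sum_range_succ, Finset.range_eq_Ico,
    Finset.sum_eq_sum_Ico_succ_bot (by omega : 0 < k)]
  have e0 : (univ.filter fun v => min (G.dist u v) k = 0) = {u} := by
    ext v
    simp only [Finset.mem_filter, Finset.mem_univ, true_and, Finset.mem_singleton]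
    constructor
    · intro h
      have : G.dist u v = 0 := by
        rcases le_total (G.dist u v) k with h'|h' <;> omega
      exact (hc.dist_eq_zero_iff.mp this).symm
    · rintro rfl; simp
  have ei : ∀ i ∈ Ico 1 k,
      #(univ.filter fun v => min (G.dist u v) k = i)
        = #(univ.filter fun v => G.dist u v = i) := by
    intro i hi
    rw [Finset.mem_Ico] at hi
    congr 1
    ext v
    simp only [Finset.mem_filter, Finset.mem_univ, true_and]
    rcases le_total (G.dist u v) k with h'|h' <;>
      · constructor <;> intro <;> omega
  have ek : (univ.filter fun v => min (G.dist u v) k = k)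
      = (univ.filter fun v => k ≤ G.dist u v) := by
    ext v
    simp only [Finset.mem_filter, Finset.mem_univ, true_and]
    rcases le_total (G.dist u v) k with h'|h' <;>
      · constructor <;> intro <;> omega
  rw [e0, ek, Finset.sum_congr rfl ei, Finset.card_singleton]

/-- In a 2-connected graph, every nonempty intermediate level has at least two vertices. -/
lemma two_le_level (hG : KConnected G 2) (hc : G.Connected) (u v : V) (i : ℕ) (h1 : 1 ≤ i)
    (hiv : i < G.dist u v) : 2 ≤ #(univ.filter fun x => G.dist u x = i) := by
  obtain ⟨w, hw⟩ : ∃ w, G.dist u w = i := by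
    obtain ⟨p⟩ := hc u v
    obtain ⟨x, _, hx⟩ := exists_mem_support_dist_eq hc u p i
      (by rw [SimpleGraph.dist_self]; omega) hiv.le
    exact ⟨x, hx⟩
  by_contra hlt
  push_neg at hlt
  have huniq : ∀ x, G.dist u x = i → x = w := by
    intro x hx
    by_contra hxw
    have h2 : 1 < #(univ.filter fun x => G.dist u x = i) :=
      Finset.one_lt_card.mpr ⟨x, by simp [hx], w, by simp [hw], hxw⟩
    omega
  have hS := hG.2 {w} (by simp)
  have hwu : w ≠ u := by
    intro h; rw [h, SimpleGraph.dist_self] at hw; omega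
  have hwv : w ≠ v := by
    intro h; rw [h] at hw; omega
  have hus : u ∈ ((↑({w} : Finset V) : Set V))ᶜ := by simp [hwu.symm]
  have hvs : v ∈ ((↑({w} : Finset V) : Set V))ᶜ := by simp [hwv.symm]
  obtain ⟨q⟩ := hS.preconnected ⟨u, hus⟩ ⟨v, hvs⟩
  obtain ⟨x, hxsup, hxd⟩ := exists_mem_support_dist_eq hc u
    (q.map (SimpleGraph.Embedding.induce ((↑({w} : Finset V) : Set V))ᶜ).toHom) i
    (by show G.dist u u ≤ i; rw [SimpleGraph.dist_self]; omega)
    (by show i ≤ G.dist u v; exact hiv.le)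
  rw [SimpleGraph.Walk.support_map] at hxsup
  obtain ⟨y, _, hyx⟩ := List.mem_map.mp hxsup
  have hyval : (y : V) = x := hyx
  have hyw : (y : V) ≠ w := by simpa using y.2
  exact hyw (hyval.trans (huniq x hxd))

end WienerAux

namespace WienerAux

open SimpleGraph Finset

attribute [local instance 10] Classical.propDecidable

variable {V : Type*} [Fintype V] [DecidableEq V] {G : SimpleGraph V}

/-- Upper bound for the number of far vertices in a 2-connected graph. -/
lemma sk_le (hG : KConnected G 2) (hc : G.Connected) (u : V) (k : ℕ) (hk : 1 ≤ k) :
    #(univ.filter fun v => k ≤ G.dist u v) ≤ Fintype.card V + 1 - 2 * k := by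
  by_cases h0 : #(univ.filter fun v => k ≤ G.dist u v) = 0
  · omega
  · obtain ⟨v, hv⟩ := Finset.card_pos.mp (Nat.pos_of_ne_zero h0)
    rw [Finset.mem_filter] at hv
    have hd := card_decomp hc u k hk
    have hlv : ∀ i ∈ Ico 1 k, 2 ≤ #(univ.filter fun x => G.dist u x = i) := by
      intro i hi
      rw [Finset.mem_Ico] at hi
      exact two_le_level hG hc u v i hi.1 (lt_of_lt_of_le hi.2 hv.2)
    have hsum : 2 * (k - 1) ≤ ∑ i ∈ Ico 1 k, #(univ.filter fun x => G.dist u x = i) := by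
      calc 2 * (k - 1) = ∑ _i ∈ Ico 1 k, 2 := by
            rw [Finset.sum_const, Nat.card_Ico, smul_eq_mul]; ring
        _ ≤ _ := Finset.sum_le_sum hlv
    omega

/-- In a connected 2-regular graph all levels have at most two vertices. -/
lemma level_le_two (hc : G.Connected) (hreg : ∀ v, #(univ.filter fun w => G.Adj v w) = 2)
    (u : V) : ∀ i, 1 ≤ i → #(univ.filter fun x => G.dist u x = i) ≤ 2 := by
  intro i
  induction i with
  | zero => omega
  | succ i ih =>
    intro _
    by_cases hi : i = 0
    · subst hi
      have hlvl : (univ.filter fun x => G.dist u x = 1) = (univ.filter fun w => G.Adj u w) := by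
        ext x
        simp only [Finset.mem_filter, Finset.mem_univ, true_and]
        exact SimpleGraph.dist_eq_one_iff_adj
      rw [hlvl, hreg u]
    · have h1i : 1 ≤ i := by omega
      have hpred : ∀ x, x ∈ (univ.filter fun y => G.dist u y = i + 1) →
          ∃ w, G.Adj w x ∧ G.dist u w = i := by
        intro x hx
        rw [Finset.mem_filter] at hx
        exact exists_adj_dist_pred hc hx.2
      choose! pr hpr1 hpr2 using hpred
      refine le_trans (Finset.card_le_card_of_injOn pr ?_ ?_) (ih h1i)
      · intro x hx
        simp only [Finset.mem_coe, Finset.mem_filter, Finset.mem_univ, true_and]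
        exact hpr2 x hx
      · intro x hx y hy hxy
        by_contra hne
        have hxmem : G.dist u x = i + 1 := by simpa using hx
        have hymem : G.dist u y = i + 1 := by simpa using hy
        have hxf : x ∈ (univ.filter fun y => G.dist u y = i + 1) := by simpa using hx
        have hyf : y ∈ (univ.filter fun y => G.dist u y = i + 1) := by simpa using hy
        have hwx : G.dist u (pr x) = i := hpr2 x hxf
        obtain ⟨w2, hw2a, hw2d⟩ := exists_adj_dist_pred hc
          (show G.dist u (pr x) = (i - 1) + 1 by omega)
        have hax : G.Adj (pr x) x := hpr1 x hxf
        have hay : G.Adj (pr x) y := by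
          have h' := hpr1 y hyf
          rwa [← hxy] at h'
        have haw2 : G.Adj (pr x) w2 := hw2a.symm
        have hxw2 : x ≠ w2 := fun h => by rw [h] at hxmem; omega
        have hyw2 : y ≠ w2 := fun h => by rw [h] at hymem; omega
        have hsub : ({x, y, w2} : Finset V) ⊆ (univ.filter fun w => G.Adj (pr x) w) := by
          intro z hz
          simp only [Finset.mem_insert, Finset.mem_singleton] at hz
          simp only [Finset.mem_filter, Finset.mem_univ, true_and]
          rcases hz with rfl | rfl | rfl
          · exact hax
          · exact hay
          · exact haw2
        have hcard3 : #({x, y, w2} : Finset V) = 3 := by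
          rw [Finset.card_insert_of_notMem (by simp [hne, hxw2]),
            Finset.card_insert_of_notMem (by simp [hyw2]), Finset.card_singleton]
        have hle := Finset.card_le_card hsub
        rw [hcard3, hreg (pr x)] at hle
        omega

/-- Lower bound for the number of far vertices in a connected 2-regular graph. -/
lemma le_sk (hc : G.Connected) (hreg : ∀ v, #(univ.filter fun w => G.Adj v w) = 2)
    (u : V) (k : ℕ) (hk : 1 ≤ k) :
    Fintype.card V + 1 - 2 * k ≤ #(univ.filter fun v => k ≤ G.dist u v) := by
  have hd := card_decomp hc u k hk
  have hsum : ∑ i ∈ Ico 1 k, #(univ.filter fun x => G.dist u x = i) ≤ 2 * (k - 1) := by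
    calc ∑ i ∈ Ico 1 k, #(univ.filter fun x => G.dist u x = i)
        ≤ ∑ _i ∈ Ico 1 k, 2 := Finset.sum_le_sum fun i hi =>
            level_le_two hc hreg u i (Finset.mem_Ico.mp hi).1
      _ = 2 * (k - 1) := by rw [Finset.sum_const, Nat.card_Ico, smul_eq_mul]; ring
  omega

/-- If the number of vertices at distance at least 2 is `n - 3`, the degree is 2. -/
lemma degree_eq_two_of_sk (hc : G.Connected) (u : V) (hn : 3 ≤ Fintype.card V)
    (h : #(univ.filter fun v => 2 ≤ G.dist u v) = Fintype.card V - 3) :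
    #(univ.filter fun w => G.Adj u w) = 2 := by
  have hd := card_decomp hc u 2 (by omega)
  rw [show Ico 1 2 = {1} from Nat.Ico_succ_singleton 1, Finset.sum_singleton] at hd
  have hlvl : (univ.filter fun x => G.dist u x = 1) = (univ.filter fun w => G.Adj u w) := by
    ext x
    simp only [Finset.mem_filter, Finset.mem_univ, true_and]
    exact SimpleGraph.dist_eq_one_iff_adj
  rw [hlvl] at hd
  omega

end WienerAux

namespace WienerAux

open SimpleGraph Finset

variable {V : Type*} [Fintype V] [DecidableEq V] {G : SimpleGraph V}

lemma sum_offDiag_eq_two_mul_wienerF (f : ℕ → ℝ) :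
    ∑ p ∈ univ.offDiag, f (G.dist p.1 p.2) = 2 * wienerF G f := by
  have hfib := Finset.sum_fiberwise_eq_sum_filter univ.offDiag
    (univ.filter fun q : Sym2 V => ¬ q.IsDiag) Sym2.mk.uncurry (fun p => f (G.dist p.1 p.2))
  have hR : (univ.offDiag.filter fun p => Sym2.mk.uncurry p ∈ univ.filter fun q : Sym2 V => ¬ q.IsDiag)
      = univ.offDiag := by
    apply Finset.filter_true_of_mem
    intro p hp
    rw [Finset.mem_offDiag] at hp
    simp only [Finset.mem_filter, Finset.mem_univ, true_and, Function.uncurry_def]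
    rw [Sym2.isDiag_iff_proj_eq]
    exact hp.2.2
  have hL : ∀ q ∈ (univ.filter fun q : Sym2 V => ¬ q.IsDiag),
      (∑ p ∈ univ.offDiag.filter fun p => Sym2.mk.uncurry p = q, f (G.dist p.1 p.2))
        = 2 * f (pairDist G q) := by
    intro q hq
    induction q with
    | _ a b =>
      simp only [Finset.mem_filter, Finset.mem_univ, true_and, Sym2.mk_isDiag_iff] at hq
      have hfiber : (univ.offDiag.filter fun p => Sym2.mk.uncurry p = s(a, b))
          = {(a, b), (b, a)} := by
        ext ⟨x, y⟩
        simp only [Finset.mem_filter, Finset.mem_offDiag, Finset.mem_univ, true_and,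
          Finset.mem_insert, Finset.mem_singleton, Prod.mk.injEq, Function.uncurry_apply_pair,
            Sym2.eq_iff]
        constructor
        · rintro ⟨_, (⟨rfl, rfl⟩ | ⟨rfl, rfl⟩)⟩
          · exact Or.inl ⟨rfl, rfl⟩
          · exact Or.inr ⟨rfl, rfl⟩
        · rintro (⟨rfl, rfl⟩ | ⟨rfl, rfl⟩)
          · exact ⟨hq, Or.inl ⟨rfl, rfl⟩⟩
          · exact ⟨fun h => hq h.symm, Or.inr ⟨rfl, rfl⟩⟩
      rw [hfiber, Finset.sum_pair (by simp [Prod.ext_iff]; exact fun h => absurd h hq)]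
      have h1 : pairDist G s(a, b) = G.dist a b := rfl
      have h2 : G.dist b a = G.dist a b := SimpleGraph.dist_comm
      simp only [h1, h2]
      ring
  rw [hR] at hfib
  rw [← hfib, Finset.sum_congr rfl hL, ← Finset.mul_sum]
  rfl

lemma telescope (f : ℕ → ℝ) (N : ℕ) :
    ∀ d : ℕ, 1 ≤ d → d ≤ N →
      f d = f 1 + ∑ k ∈ Icc 2 N, (if k ≤ d then f k - f (k - 1) else 0) := by
  have key : ∀ d, 1 ≤ d → f d = f 1 + ∑ k ∈ Icc 2 d, (f k - f (k - 1)) := by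
    intro d hd
    induction d with
    | zero => omega
    | succ d ih =>
      by_cases hd0 : d = 0
      · subst hd0
        rw [show Finset.Icc 2 1 = ∅ from Finset.Icc_eq_empty (by omega)]
        simp
      · rw [Finset.sum_Icc_succ_top (by omega : 2 ≤ d + 1), ← add_assoc,
          ← ih (by omega)]
        simp
  intro d h1 h2
  rw [key d h1]
  congr 1
  rw [← Finset.sum_filter]
  congr 1
  ext k
  simp only [Finset.mem_Icc, Finset.mem_filter]
  omega

lemma two_mul_wienerF (hc : G.Connected) (hn : 1 ≤ Fintype.card V) (f : ℕ → ℝ) :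
    2 * wienerF G f
      = ((Fintype.card V * Fintype.card V - Fintype.card V : ℕ) : ℝ) * f 1
        + ∑ k ∈ Icc 2 (Fintype.card V - 1),
            (f k - f (k - 1)) * ((∑ u : V, #(univ.filter fun v => k ≤ G.dist u v) : ℕ) : ℝ) := by
  rw [← sum_offDiag_eq_two_mul_wienerF]
  set N := Fintype.card V - 1 with hN
  have hdist : ∀ p ∈ (univ : Finset V).offDiag,
      1 ≤ G.dist p.1 p.2 ∧ G.dist p.1 p.2 ≤ N := by
    intro p hp
    rw [Finset.mem_offDiag] at hp
    constructor
    · exact hc.pos_dist_of_ne hp.2.2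
    · obtain ⟨q, hq, hql⟩ := hc.exists_path_of_dist p.1 p.2
      have := hq.length_lt
      omega
  calc ∑ p ∈ univ.offDiag, f (G.dist p.1 p.2)
      = ∑ p ∈ univ.offDiag,
          (f 1 + ∑ k ∈ Icc 2 N, (if k ≤ G.dist p.1 p.2 then f k - f (k - 1) else 0)) := by
        refine Finset.sum_congr rfl fun p hp => ?_
        exact telescope f N _ (hdist p hp).1 (hdist p hp).2
    _ = ((Fintype.card V * Fintype.card V - Fintype.card V : ℕ) : ℝ) * f 1
        + ∑ k ∈ Icc 2 N,
            ∑ p ∈ univ.offDiag, (if k ≤ G.dist p.1 p.2 then f k - f (k - 1) else 0) := by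
        rw [Finset.sum_add_distrib, Finset.sum_const, Finset.sum_comm,
          Finset.offDiag_card, Finset.card_univ, nsmul_eq_mul]
    _ = _ := by
        congr 1
        refine Finset.sum_congr rfl fun k hk => ?_
        rw [Finset.mem_Icc] at hk
        rw [← Finset.sum_filter, Finset.sum_const, nsmul_eq_mul, mul_comm]
        congr 2
        -- cardinality of the filtered offDiag equals the double count
        have hofd : (univ.offDiag.filter fun p : V × V => k ≤ G.dist p.1 p.2)
            = (univ : Finset (V × V)).filter fun p => k ≤ G.dist p.1 p.2 := by
          ext p
          simp only [Finset.mem_filter, Finset.mem_offDiag, Finset.mem_univ, true_and]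
          refine ⟨fun h => h.2, fun h => ⟨?_, h⟩⟩
          intro hpq
          rw [hpq, SimpleGraph.dist_self] at h
          omega
        rw [hofd]
        norm_cast
        rw [Finset.card_filter, Fintype.sum_prod_type]
        exact Finset.sum_congr rfl fun u _ => (Finset.card_filter _ _).symm

end WienerAux

namespace WienerAux

open SimpleGraph Finset

attribute [local instance 10] Classical.propDecidable

variable {V : Type*} [Fintype V] [DecidableEq V]

/-- The neighbour of `c` other than `p` in a 2-regular graph. -/
noncomputable def nextV (H : SimpleGraph V) (p c : V) : V :=
  if h : ((univ.filter fun w => H.Adj c w).erase p).Nonempty then h.choose else c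

variable {H : SimpleGraph V}

lemma nextV_mem (hreg : ∀ v, #(univ.filter fun w => H.Adj v w) = 2) {p c : V}
    (h : H.Adj p c) : nextV H p c ∈ (univ.filter fun w => H.Adj c w).erase p := by
  have hmem : p ∈ (univ.filter fun w => H.Adj c w) := by simp [h.symm]
  have hcard : #((univ.filter fun w => H.Adj c w).erase p) = 1 := by
    rw [Finset.card_erase_of_mem hmem, hreg c]
  have hne : ((univ.filter fun w => H.Adj c w).erase p).Nonempty :=
    Finset.card_pos.mp (by omega)
  rw [nextV, dif_pos hne]
  exact hne.choose_spec

lemma nextV_adj (hreg : ∀ v, #(univ.filter fun w => H.Adj v w) = 2) {p c : V}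
    (h : H.Adj p c) : H.Adj c (nextV H p c) := by
  have := nextV_mem hreg h
  rw [Finset.mem_erase, Finset.mem_filter] at this
  exact this.2.2

lemma nextV_ne (hreg : ∀ v, #(univ.filter fun w => H.Adj v w) = 2) {p c : V}
    (h : H.Adj p c) : nextV H p c ≠ p := by
  have := nextV_mem hreg h
  rw [Finset.mem_erase] at this
  exact this.1

lemma nextV_unique (hreg : ∀ v, #(univ.filter fun w => H.Adj v w) = 2) {p c z : V}
    (h : H.Adj p c) (hz : H.Adj c z) (hzp : z ≠ p) : z = nextV H p c := by
  have hmem : p ∈ (univ.filter fun w => H.Adj c w) := by simp [h.symm]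
  have hcard : #((univ.filter fun w => H.Adj c w).erase p) = 1 := by
    rw [Finset.card_erase_of_mem hmem, hreg c]
  have hz' : z ∈ (univ.filter fun w => H.Adj c w).erase p := by
    rw [Finset.mem_erase]; exact ⟨hzp, by simp [hz]⟩
  exact Finset.card_le_one.mp (le_of_eq hcard) z hz' _ (nextV_mem hreg h)

lemma nextV_invol (hreg : ∀ v, #(univ.filter fun w => H.Adj v w) = 2) {p c : V}
    (h : H.Adj p c) : nextV H (nextV H p c) c = p :=
  (nextV_unique hreg (nextV_adj hreg h).symm h.symm (nextV_ne hreg h).symm).symm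

/-- The walk sequence in a 2-regular graph. -/
noncomputable def seqV (H : SimpleGraph V) (u0 a0 : V) : ℕ → V × V
  | 0 => (u0, a0)
  | (i + 1) => ((seqV H u0 a0 i).2, nextV H (seqV H u0 a0 i).1 (seqV H u0 a0 i).2)

end WienerAux

namespace WienerAux

open SimpleGraph Finset

attribute [local instance 10] Classical.propDecidable

variable {V : Type*} [Fintype V] [DecidableEq V] {H : SimpleGraph V}

lemma nonempty_iso_cycle (hc : H.Connected)
    (hreg : ∀ v, #(univ.filter fun w => H.Adj v w) = 2)
    (hn3 : 3 ≤ Fintype.card V) :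
    Nonempty (H ≃g SimpleGraph.cycleGraph (Fintype.card V)) := by
  classical
  obtain ⟨n, hn⟩ : ∃ k, k = Fintype.card V := ⟨_, rfl⟩
  rw [← hn]
  rw [← hn] at hn3
  have hV : Nonempty V := Fintype.card_pos_iff.mp (by omega)
  obtain ⟨u0⟩ := hV
  obtain ⟨a0, ha0⟩ := Finset.card_pos.mp
    (show 0 < #(univ.filter fun w => H.Adj u0 w) by rw [hreg u0]; omega)
  have hadj0 : H.Adj u0 a0 := (Finset.mem_filter.mp ha0).2
  set x : ℕ → V := fun i => (seqV H u0 a0 i).1 with hxdef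
  have hx0 : x 0 = u0 := rfl
  have hrec : ∀ i, x (i + 2) = nextV H (x i) (x (i + 1)) := fun i => rfl
  have hadj : ∀ i, H.Adj (x i) (x (i + 1)) := by
    intro i
    induction i with
    | zero => exact hadj0
    | succ i ih => rw [hrec i]; exact nextV_adj hreg ih
  have hne2 : ∀ i, x (i + 2) ≠ x i := fun i => by rw [hrec i]; exact nextV_ne hreg (hadj i)
  have hnbrs : ∀ i, (univ.filter fun w => H.Adj (x (i + 1)) w) = {x i, x (i + 2)} := by
    intro i
    refine (Finset.eq_of_subset_of_card_le ?_ ?_).symm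
    · intro z hz
      rw [Finset.mem_insert, Finset.mem_singleton] at hz
      rcases hz with rfl | rfl
      · simp only [Finset.mem_filter, Finset.mem_univ, true_and]
        exact (hadj i).symm
      · simp only [Finset.mem_filter, Finset.mem_univ, true_and]
        exact hadj (i + 1)
    · rw [hreg (x (i + 1)),
        Finset.card_insert_of_notMem (fun h => (hne2 i) (Finset.mem_singleton.mp h).symm),
        Finset.card_singleton]
  have hdet : ∀ i j, x i = x j → x (i + 1) = x (j + 1) → ∀ t, x (i + t) = x (j + t) := by
    intro i j h0 h1
    have key : ∀ t, x (i + t) = x (j + t) ∧ x (i + t + 1) = x (j + t + 1) := by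
      intro t
      induction t with
      | zero => exact ⟨h0, h1⟩
      | succ t ih =>
        refine ⟨ih.2, ?_⟩
        have e1 : i + (t + 1) + 1 = (i + t) + 2 := by omega
        have e2 : j + (t + 1) + 1 = (j + t) + 2 := by omega
        rw [e1, e2, hrec (i + t), hrec (j + t), ih.1, ih.2]
    exact fun t => (key t).1
  have hcoll : ∃ j, 0 < j ∧ ∃ i, i < j ∧ x j = x i := by
    obtain ⟨a, b, hab, hxab⟩ := Fintype.exists_ne_map_eq_of_card_lt
      (fun t : Fin (n + 1) => x t) (by rw [Fintype.card_fin, ← hn]; omega)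
    rcases Ne.lt_or_gt (show (a : ℕ) ≠ b from fun h => hab (Fin.ext h)) with h | h
    · exact ⟨b, by omega, a, h, hxab.symm⟩
    · exact ⟨a, by omega, b, h, hxab⟩
  set m := Nat.find hcoll with hm
  obtain ⟨hm0, i0, hi0m, hxi0⟩ := Nat.find_spec hcoll
  rw [← hm] at hm0 hi0m hxi0
  have hinj : ∀ i j, i < j → j < m → x i ≠ x j := by
    intro i j hij hjm heq
    exact absurd ⟨by omega, i, hij, heq.symm⟩ (Nat.find_min hcoll hjm)
  have hm3 : 3 ≤ m := by
    have h1 : m ≠ 1 := by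
      intro h; rw [h] at hi0m hxi0
      have hz : i0 = 0 := by omega
      rw [hz] at hxi0; exact (hadj 0).ne' hxi0
    have h2 : m ≠ 2 := by
      intro h; rw [h] at hi0m hxi0
      rcases (by omega : i0 = 0 ∨ i0 = 1) with hz | hz
      · rw [hz] at hxi0; exact hne2 0 hxi0
      · rw [hz] at hxi0; exact (hadj 1).ne' hxi0
    omega
  have heq0 : x m = x 0 := by
    rcases Nat.eq_zero_or_pos i0 with hz | hpos
    · rw [hz] at hxi0; exact hxi0
    · exfalso
      have hnb := hnbrs (i0 - 1)
      rw [show i0 - 1 + 1 = i0 from by omega, show i0 - 1 + 2 = i0 + 1 from by omega] at hnb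
      have hmem : x (m - 1) ∈ (univ.filter fun w => H.Adj (x i0) w) := by
        rw [Finset.mem_filter]
        refine ⟨Finset.mem_univ _, ?_⟩
        rw [← hxi0]
        have h' := (hadj (m - 1)).symm
        rw [show m - 1 + 1 = m from by omega] at h'
        exact h'
      rw [hnb, Finset.mem_insert, Finset.mem_singleton] at hmem
      rcases hmem with hmem | hmem
      · exact hinj (i0 - 1) (m - 1) (by omega) (by omega) hmem.symm
      · rcases Nat.lt_trichotomy (i0 + 1) (m - 1) with h | h | h
        · exact hinj (i0 + 1) (m - 1) h (by omega) hmem.symm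
        · have hz : i0 + 2 = m := by omega
          rw [← hz] at hxi0
          exact hne2 i0 hxi0
        · have hz : i0 + 1 = m := by omega
          rw [← hz] at hxi0
          exact (hadj i0).ne' hxi0
  have heq1 : x (m + 1) = x 1 := by
    have hnb := hnbrs (m - 1)
    rw [show m - 1 + 1 = m from by omega, show m - 1 + 2 = m + 1 from by omega] at hnb
    have hmem : x 1 ∈ (univ.filter fun w => H.Adj (x m) w) := by
      rw [Finset.mem_filter]
      exact ⟨Finset.mem_univ _, by rw [heq0]; exact hadj 0⟩
    rw [hnb, Finset.mem_insert, Finset.mem_singleton] at hmem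
    rcases hmem with hmem | hmem
    · exact absurd hmem (hinj 1 (m - 1) (by omega) (by omega))
    · exact hmem.symm
  have hper : ∀ t, x (m + t) = x t := by
    intro t
    have h' := hdet m 0 heq0 heq1 t
    simpa using h'
  have hmod : ∀ t, x t = x (t % m) := by
    intro t
    induction t using Nat.strong_induction_on with
    | _ t ih =>
      rcases Nat.lt_or_ge t m with h | h
      · rw [Nat.mod_eq_of_lt h]
      · rw [Nat.mod_eq_sub_mod h]
        calc x t = x (m + (t - m)) := by congr 1; omega
          _ = x (t - m) := hper _
          _ = x ((t - m) % m) := ih _ (by omega)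
  set S : Finset V := (Finset.range m).image x with hS
  have hxS : ∀ t, x t ∈ S := by
    intro t
    rw [hS]
    exact Finset.mem_image.mpr
      ⟨t % m, Finset.mem_range.mpr (Nat.mod_lt _ (by omega)), (hmod t).symm⟩
  have hclosed : ∀ t w, H.Adj (x t) w → w ∈ S := by
    intro t w hw
    have hnb := hnbrs (m + t - 1)
    rw [show m + t - 1 + 1 = m + t from by omega,
      show m + t - 1 + 2 = m + t + 1 from by omega] at hnb
    have hmem : w ∈ (univ.filter fun v => H.Adj (x (m + t)) v) := by
      rw [Finset.mem_filter]
      exact ⟨Finset.mem_univ _, by rw [hper t]; exact hw⟩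
    rw [hnb, Finset.mem_insert, Finset.mem_singleton] at hmem
    rcases hmem with rfl | rfl
    · exact hxS _
    · exact hxS _
  have hwalk : ∀ (a b : V) (W : H.Walk a b), a ∈ S → b ∈ S := by
    intro a b W
    induction W with
    | nil => exact id
    | @cons a c b h W ih =>
      intro ha
      apply ih
      obtain ⟨t, _, rfl⟩ := Finset.mem_image.mp ha
      exact hclosed t _ h
  have hsurj : ∀ v, v ∈ S := fun v => (hc.preconnected u0 v).elim fun W => hwalk u0 v W (hxS 0)
  have hScard : #S = m := by
    rw [hS, Finset.card_image_of_injOn, Finset.card_range]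
    intro a ha b hb hab
    rw [Finset.coe_range, Set.mem_Iio] at ha hb
    by_contra hne
    rcases Ne.lt_or_gt hne with h | h
    · exact hinj a b h hb hab
    · exact hinj b a h ha hab.symm
  have hmn : m = n := by
    have hU : S = univ := Finset.eq_univ_iff_forall.mpr hsurj
    rw [hn, ← hScard, hU, Finset.card_univ]
  -- the bijection
  set F : Fin n → V := fun i => x i.val with hF
  have hxinj : ∀ a b : ℕ, a < n → b < n → x a = x b → a = b := by
    intro a b ha hb hab
    by_contra hne
    rcases Ne.lt_or_gt hne with h | h
    · exact hinj a b h (by omega) hab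
    · exact hinj b a h (by omega) hab.symm
  have hFinj : Function.Injective F := by
    intro a b hab
    exact Fin.ext (hxinj _ _ a.isLt b.isLt hab)
  have hFbij : Function.Bijective F :=
    (Fintype.bijective_iff_injective_and_card F).mpr ⟨hFinj, by rw [Fintype.card_fin, hn]⟩
  set e : Fin n ≃ V := Equiv.ofBijective F hFbij with he
  have hmodn : ∀ t, x t = x (t % n) := by intro t; rw [← hmn]; exact hmod t
  have hpern : ∀ t, x (n + t) = x t := by intro t; rw [← hmn]; exact hper t
  haveI : NeZero n := ⟨by omega⟩
  have hone : ((1 : Fin n) : ℕ) = 1 := by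
    rw [Fin.val_one']
    exact Nat.mod_eq_of_lt (by omega)
  have hvadd : ∀ a : Fin n, ((a + 1 : Fin n) : ℕ) = ((a : ℕ) + 1) % n := by
    intro a; rw [Fin.add_def, hone]
  have haux : ∀ i j : Fin n, j - i = (1 : Fin n) → H.Adj (F i) (F j) := by
    intro i j hji
    have hj : j = i + 1 := by
      rw [sub_eq_iff_eq_add] at hji
      rw [hji, add_comm]
    have hv : ((i + 1 : Fin n) : ℕ) = ((i : ℕ) + 1) % n := hvadd i
    rw [hj]
    show H.Adj (x i.val) (x ((i + 1 : Fin n) : ℕ))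
    rw [hv, ← hmodn ((i : ℕ) + 1)]
    exact hadj i.val
  have hiff : ∀ i j : Fin n, H.Adj (F i) (F j) ↔ (SimpleGraph.cycleGraph n).Adj i j := by
    intro i j
    constructor
    · intro hadjF
      have hnb := hnbrs (n + (i : ℕ) - 1)
      rw [show n + (i : ℕ) - 1 + 1 = n + (i : ℕ) from by omega,
        show n + (i : ℕ) - 1 + 2 = n + (i : ℕ) + 1 from by omega] at hnb
      have hmem : F j ∈ (univ.filter fun w => H.Adj (x (n + (i : ℕ))) w) := by
        rw [Finset.mem_filter]
        exact ⟨Finset.mem_univ _, by rw [hpern (i : ℕ)]; exact hadjF⟩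
      rw [hnb, Finset.mem_insert, Finset.mem_singleton] at hmem
      rw [SimpleGraph.cycleGraph_adj']
      rcases hmem with hmem | hmem
      · -- F j = x (n + i - 1) : then i = j + 1
        have hj : (j : ℕ) = ((i : ℕ) + (n - 1)) % n := by
          apply hxinj _ _ j.isLt (Nat.mod_lt _ (by omega))
          calc x (j : ℕ) = x (n + (i : ℕ) - 1) := hmem
            _ = x ((i : ℕ) + (n - 1)) := by congr 1; omega
            _ = x (((i : ℕ) + (n - 1)) % n) := hmodn _
        have hij : i = j + 1 := by
          apply Fin.ext
          have hv2 : ((j + 1 : Fin n) : ℕ) = (i : ℕ) := by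
            rw [hvadd j, hj, Nat.mod_add_mod,
              show (i : ℕ) + (n - 1) + 1 = (i : ℕ) + n from by omega,
              Nat.add_mod_right, Nat.mod_eq_of_lt i.isLt]
          rw [hv2]
        left
        rw [hij, add_sub_cancel_left, hone]
      · -- F j = x (n + i + 1) : then j = i + 1
        have hj : (j : ℕ) = ((i : ℕ) + 1) % n := by
          apply hxinj _ _ j.isLt (Nat.mod_lt _ (by omega))
          calc x (j : ℕ) = x (n + (i : ℕ) + 1) := hmem
            _ = x (n + ((i : ℕ) + 1)) := by rw [Nat.add_assoc]
            _ = x ((i : ℕ) + 1) := hpern _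
            _ = x (((i : ℕ) + 1) % n) := hmodn _
        have hij : j = i + 1 := by
          apply Fin.ext
          rw [hvadd i, hj]
        right
        rw [hij, add_sub_cancel_left, hone]
    · intro hcyc
      rw [SimpleGraph.cycleGraph_adj'] at hcyc
      rcases hcyc with h | h
      · have h' : i - j = 1 := by
          apply Fin.ext
          rw [hone]; exact h
        exact (haux j i h').symm
      · have h' : j - i = 1 := by
          apply Fin.ext
          rw [hone]; exact h
        exact haux i j h'
  refine ⟨SimpleGraph.Iso.symm ⟨e, ?_⟩⟩
  intro a b
  exact hiff a b

end WienerAux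

open WienerAux

/-- Among `2`-connected graphs with `n` vertices the cycle `C_n` maximises `W_f`
for strictly increasing `f`, with equality iff the graph is isomorphic to `C_n`. -/
theorem wienerF_le_wienerF_cycle_two_connected {V : Type*} [Fintype V] [DecidableEq V]
    (G : SimpleGraph V) (hG : KConnected G 2)
    (n : ℕ) (hcard : Fintype.card V = n)
    (f : ℕ → ℝ) (hf : StrictMono f) :
    wienerF G f ≤ wienerF (SimpleGraph.cycleGraph n) f ∧
      (wienerF G f = wienerF (SimpleGraph.cycleGraph n) f ↔
        Nonempty (G ≃g SimpleGraph.cycleGraph n)) := by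
  classical
  have hn3 : 3 ≤ n := by have := hG.1; omega
  have hGconn : G.Connected := by
    have h0 := hG.2 ∅ (by simp)
    have hset : ((↑(∅ : Finset V) : Set V))ᶜ = (Set.univ : Set V) := by simp
    rw [hset] at h0
    exact (G.induceUnivIso.connected_iff).mp h0
  have hCconn : (SimpleGraph.cycleGraph n).Connected := by
    obtain ⟨m, hm⟩ : ∃ m, n = m + 1 := ⟨n - 1, by omega⟩
    rw [hm]
    exact SimpleGraph.cycleGraph_connected
  have hCreg0 : ∀ v : Fin n, #((SimpleGraph.cycleGraph n).neighborFinset v) = 2 := by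
    obtain ⟨m, hm⟩ : ∃ m, n = m + 3 := ⟨n - 3, by omega⟩
    rw [hm]
    intro v
    exact SimpleGraph.cycleGraph_degree_three_le
  have hCreg : ∀ v : Fin n,
      #(@Finset.filter _ (fun w => (SimpleGraph.cycleGraph n).Adj v w)
        (fun a => Classical.propDecidable _) Finset.univ) = 2 := by
    intro v
    have hset : (@Finset.filter _ (fun w => (SimpleGraph.cycleGraph n).Adj v w)
        (fun a => Classical.propDecidable _) Finset.univ)
        = (SimpleGraph.cycleGraph n).neighborFinset v := by
      ext w
      simp [SimpleGraph.mem_neighborFinset]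
    rw [hset]
    exact hCreg0 v
  -- the two expansions
  have hformG := two_mul_wienerF (G := G) hGconn (by omega) f
  have hformC := two_mul_wienerF (G := SimpleGraph.cycleGraph n) hCconn
    (by rw [Fintype.card_fin]; omega) f
  rw [hcard] at hformG
  simp only [Fintype.card_fin] at hformC
  -- pointwise inequality between the double counts
  have hub : ∀ (k : ℕ), 1 ≤ k → ∀ u : V,
      #(Finset.univ.filter fun v => k ≤ G.dist u v) ≤ n + 1 - 2 * k := by
    intro k hk u
    have := sk_le hG hGconn u k hk
    rwa [hcard] at this
  have hlb : ∀ (k : ℕ), 1 ≤ k → ∀ u : Fin n,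
      n + 1 - 2 * k ≤ #(Finset.univ.filter fun v => k ≤ (SimpleGraph.cycleGraph n).dist u v) := by
    intro k hk u
    have := le_sk hCconn hCreg u k hk
    rwa [Fintype.card_fin] at this
  have hSK : ∀ k, 1 ≤ k →
      (∑ u : V, #(Finset.univ.filter fun v => k ≤ G.dist u v))
      ≤ ∑ u : Fin n, #(Finset.univ.filter fun v => k ≤ (SimpleGraph.cycleGraph n).dist u v) := by
    intro k hk
    calc ∑ u : V, #(Finset.univ.filter fun v => k ≤ G.dist u v)
        ≤ ∑ _u : V, (n + 1 - 2 * k) := Finset.sum_le_sum fun u _ => hub k hk u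
      _ = n * (n + 1 - 2 * k) := by
          rw [Finset.sum_const, Finset.card_univ, hcard, smul_eq_mul]
      _ = ∑ _u : Fin n, (n + 1 - 2 * k) := by
          rw [Finset.sum_const, Finset.card_univ, Fintype.card_fin, smul_eq_mul]
      _ ≤ _ := Finset.sum_le_sum fun u _ => hlb k hk u
  have hΔpos : ∀ k : ℕ, 2 ≤ k → 0 < f k - f (k - 1) := by
    intro k hk
    have : (k - 1 : ℕ) < k := by omega
    exact sub_pos.mpr (hf this)
  have hle2 : 2 * wienerF G f ≤ 2 * wienerF (SimpleGraph.cycleGraph n) f := by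
    rw [hformG, hformC]
    apply add_le_add_right
    apply Finset.sum_le_sum
    intro k hk
    rw [Finset.mem_Icc] at hk
    have hcast : ((∑ u : V, #(Finset.univ.filter fun v => k ≤ G.dist u v) : ℕ) : ℝ)
        ≤ ((∑ u : Fin n, #(Finset.univ.filter fun v =>
            k ≤ (SimpleGraph.cycleGraph n).dist u v) : ℕ) : ℝ) :=
      Nat.cast_le.mpr (hSK k (by omega))
    exact mul_le_mul_of_nonneg_left hcast (le_of_lt (hΔpos k hk.1))
  refine ⟨by linarith, ?_, ?_⟩
  · intro heq
    -- equality forces the double counts at k = 2 to agree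
    have h2 : 2 * wienerF G f = 2 * wienerF (SimpleGraph.cycleGraph n) f := by linarith
    rw [hformG, hformC] at h2
    have hSsum : ∑ k ∈ Finset.Icc 2 (n - 1),
        (f k - f (k - 1)) * ((∑ u : V, #(Finset.univ.filter fun v => k ≤ G.dist u v) : ℕ) : ℝ)
        = ∑ k ∈ Finset.Icc 2 (n - 1),
        (f k - f (k - 1)) * ((∑ u : Fin n, #(Finset.univ.filter fun v =>
            k ≤ (SimpleGraph.cycleGraph n).dist u v) : ℕ) : ℝ) := by
      linarith
    have hzero : ∑ k ∈ Finset.Icc 2 (n - 1),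
        ((f k - f (k - 1)) * ((∑ u : Fin n, #(Finset.univ.filter fun v =>
            k ≤ (SimpleGraph.cycleGraph n).dist u v) : ℕ) : ℝ)
          - (f k - f (k - 1)) * ((∑ u : V,
            #(Finset.univ.filter fun v => k ≤ G.dist u v) : ℕ) : ℝ)) = 0 := by
      rw [Finset.sum_sub_distrib]
      linarith
    have hnonneg : ∀ k ∈ Finset.Icc 2 (n - 1),
        0 ≤ (f k - f (k - 1)) * ((∑ u : Fin n, #(Finset.univ.filter fun v =>
            k ≤ (SimpleGraph.cycleGraph n).dist u v) : ℕ) : ℝ)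
          - (f k - f (k - 1)) * ((∑ u : V,
            #(Finset.univ.filter fun v => k ≤ G.dist u v) : ℕ) : ℝ) := by
      intro k hk
      rw [Finset.mem_Icc] at hk
      have h1 := hΔpos k hk.1
      have h2' : ((∑ u : V, #(Finset.univ.filter fun v => k ≤ G.dist u v) : ℕ) : ℝ)
          ≤ ((∑ u : Fin n, #(Finset.univ.filter fun v =>
              k ≤ (SimpleGraph.cycleGraph n).dist u v) : ℕ) : ℝ) :=
        Nat.cast_le.mpr (hSK k (by omega))
      nlinarith
    have hterm := (Finset.sum_eq_zero_iff_of_nonneg hnonneg).mp hzero 2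
      (Finset.mem_Icc.mpr ⟨le_refl 2, by omega⟩)
    have hA2B2 : (∑ u : V, #(Finset.univ.filter fun v => 2 ≤ G.dist u v))
        = ∑ u : Fin n, #(Finset.univ.filter fun v => 2 ≤ (SimpleGraph.cycleGraph n).dist u v) := by
      have hΔ := hΔpos 2 (le_refl 2)
      have : ((∑ u : V, #(Finset.univ.filter fun v => 2 ≤ G.dist u v) : ℕ) : ℝ)
          = ((∑ u : Fin n, #(Finset.univ.filter fun v =>
              2 ≤ (SimpleGraph.cycleGraph n).dist u v) : ℕ) : ℝ) := by
        by_contra hne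
        have hlt : ((∑ u : V, #(Finset.univ.filter fun v => 2 ≤ G.dist u v) : ℕ) : ℝ)
            < ((∑ u : Fin n, #(Finset.univ.filter fun v =>
                2 ≤ (SimpleGraph.cycleGraph n).dist u v) : ℕ) : ℝ) :=
          lt_of_le_of_ne (Nat.cast_le.mpr (hSK 2 (by omega))) hne
        nlinarith
      exact_mod_cast this
    -- the cycle side is at least n * (n - 3)
    have hB2 : n * (n - 3) ≤ ∑ u : Fin n,
        #(Finset.univ.filter fun v => 2 ≤ (SimpleGraph.cycleGraph n).dist u v) := by
      calc n * (n - 3) = ∑ _u : Fin n, (n - 3) := by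
            rw [Finset.sum_const, Finset.card_univ, Fintype.card_fin, smul_eq_mul]
        _ ≤ _ := Finset.sum_le_sum fun u _ => by
            have := hlb 2 (by omega) u
            omega
    have hA2ub : ∀ u : V, #(Finset.univ.filter fun v => 2 ≤ G.dist u v) ≤ n - 3 := by
      intro u
      have := hub 2 (by omega) u
      omega
    have hAeach : ∀ u : V, #(Finset.univ.filter fun v => 2 ≤ G.dist u v) = n - 3 := by
      by_contra hnot
      push_neg at hnot
      obtain ⟨u0, hu0⟩ := hnot
      have hstrict : (∑ u : V, #(Finset.univ.filter fun v => 2 ≤ G.dist u v))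
          < ∑ _u : V, (n - 3) := by
        apply Finset.sum_lt_sum (fun u _ => hA2ub u)
        exact ⟨u0, Finset.mem_univ _, lt_of_le_of_ne (hA2ub u0) hu0⟩
      rw [Finset.sum_const, Finset.card_univ, hcard, smul_eq_mul] at hstrict
      omega
    have hdeg : ∀ u : V, #(Finset.univ.filter fun w => G.Adj u w) = 2 := by
      intro u
      apply degree_eq_two_of_sk hGconn u (by rw [hcard]; omega)
      rw [hcard]
      exact hAeach u
    obtain ⟨iso⟩ := nonempty_iso_cycle hGconn hdeg (by rw [hcard]; omega)
    rw [hcard] at iso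
    exact ⟨iso⟩
  · rintro ⟨iso⟩
    exact wienerF_map_iso iso f
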